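/- arXiv:2502.03348 — 7 statements merged into one kernel-verified Lean document; each statement's English description precedes it below -/
import Mathlib

section
/- If u = (x_1, x_2, x_3) in Z_m^3 satisfies x_1+x_2+x_3 ≡ 0 mod m, then D^2(u) = (x_2, x_3, x_1), i.e. D^2 acts as the cyclic left shift H on such tuples. -/
def ducci {m : ℕ} (u : Fin 3 → ZMod m) : Fin 3 → ZMod m :=
  fun i => u i + u (i + 1)

theorem ducci_sq_eq_shift (m : ℕ) (u : Fin 3 → ZMod m)
    (h : u 0 + u 1 + u 2 = 0) :
    ducci^[2] u = ![u 1, u 2, u 0] := by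
  funext i
  fin_cases i <;>
    simp [Function.iterate_succ, ducci, Fin.isValue, show (0:Fin 3)+1 = 1 from rfl,
      show (1:Fin 3)+1 = 2 from rfl, show (2:Fin 3)+1 = 0 from rfl] <;>
    linear_combination h
end

section
/- If u = (x_1, x_2, x_3) in Z_m^3 satisfies x_1+x_2+x_3 ≡ 0 mod m, then D^6(u) = u; in particular u lies in a Ducci cycle. -/
theorem ducci_six_eq_self (m : ℕ) (u : Fin 3 → ZMod m)
    (h : u 0 + u 1 + u 2 = 0) :
    ducci^[6] u = u := by
  have e0 : ducci u = fun i => u i + u (i + 1) := rfl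
  funext i
  fin_cases i <;>
  · simp only [Function.iterate_succ, Function.iterate_zero, Function.comp_apply, id_eq, ducci]
    norm_num [show ((0:Fin 3)+1) = 1 from rfl, show ((1:Fin 3)+1) = 2 from rfl,
      show ((2:Fin 3)+1) = 0 from rfl, show ((⟨2, by omega⟩ : Fin 3)) = 2 from rfl]
    linear_combination 21 * h
end

section
/- Let m be odd and u = (x_1, x_2, x_3) in Z_m^3 with x_1+x_2+x_3 ≡ 0 mod m and not all x_i equal. Then the period of u under D (the least β ≥ 1 with D^β(u) = u) is exactly 6. -/
theorem ducci_period_six_of_odd (m : ℕ) (hm : Odd m) (u : Fin 3 → ZMod m)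
    (hsum : u 0 + u 1 + u 2 = 0)
    (hne : ¬ (u 0 = u 1 ∧ u 1 = u 2)) :
    sInf {β : ℕ | 0 < β ∧ ducci^[β] u = u} = 6 := by
  have hcyc : ∀ i : Fin 3, i + 1 + 1 + 1 = i := by decide
  have i01 : (0 : Fin 3) + 1 = 1 := rfl
  have i11 : (1 : Fin 3) + 1 = 2 := rfl
  have i21 : (2 : Fin 3) + 1 = 0 := rfl
  have hs : ∀ i : Fin 3, u i + u (i + 1) + u (i + 1 + 1) = 0 := by
    intro i
    fin_cases i
    · exact hsum
    · show u 1 + u 2 + u 0 = 0; linear_combination hsum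
    · show u 2 + u 0 + u 1 = 0; linear_combination hsum
  have h6 : ducci^[6] u = u := by
    funext i
    simp only [Function.iterate_succ, Function.iterate_zero, Function.comp_apply, id_eq, ducci,
      hcyc]
    linear_combination 21 * hs i
  have hmem : 6 ∈ {β : ℕ | 0 < β ∧ ducci^[β] u = u} := ⟨by norm_num, h6⟩
  have htwo : IsUnit (2 : ZMod m) := by
    haveI : NeZero m := ⟨hm.pos.ne'⟩
    rw [show (2 : ZMod m) = ((2 : ℕ) : ZMod m) by norm_num]
    rw [ZMod.isUnit_iff_coprime]
    exact Nat.coprime_two_left.mpr hm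
  have hle : sInf {β : ℕ | 0 < β ∧ ducci^[β] u = u} ≤ 6 := Nat.sInf_le hmem
  obtain ⟨hpos, hfix⟩ := Nat.sInf_mem (⟨6, hmem⟩ :
    Set.Nonempty {β : ℕ | 0 < β ∧ ducci^[β] u = u})
  set n := sInf {β : ℕ | 0 < β ∧ ducci^[β] u = u} with hn
  interval_cases n
  · -- n = 1
    exfalso
    have e0 := congrFun hfix 0
    have e1 := congrFun hfix 1
    simp only [Function.iterate_succ, Function.iterate_zero, Function.comp_apply, id_eq, ducci,
      hcyc, i01, i11, i21] at e0 e1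
    exact hne ⟨by linear_combination hsum - 2 * e0 - e1, by linear_combination e0 - e1⟩
  · -- n = 2
    exfalso
    have e0 := congrFun hfix 0
    have e1 := congrFun hfix 1
    simp only [Function.iterate_succ, Function.iterate_zero, Function.comp_apply, id_eq, ducci,
      hcyc, i01, i11, i21] at e0 e1
    exact hne ⟨by linear_combination hsum - e0, by linear_combination hsum - e1⟩
  · -- n = 3
    exfalso
    have e0 := congrFun hfix 0
    have e1 := congrFun hfix 1
    have e2 := congrFun hfix 2
    simp only [Function.iterate_succ, Function.iterate_zero, Function.comp_apply, id_eq, ducci,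
      hcyc, i01, i11, i21] at e0 e1 e2
    have z : ∀ x : ZMod m, (2 : ZMod m) * x = 0 → x = 0 := by
      intro x hx
      obtain ⟨v, hv⟩ := htwo
      calc x = ↑v⁻¹ * ((2 : ZMod m) * x) := by rw [← hv]; simp [← mul_assoc]
        _ = 0 := by rw [hx, mul_zero]
    have z0 : u 0 = 0 := z _ (by linear_combination 3 * hsum - e0)
    have z1 : u 1 = 0 := z _ (by linear_combination 3 * hsum - e1)
    have z2 : u 2 = 0 := z _ (by linear_combination 3 * hsum - e2)
    exact hne ⟨by rw [z0, z1], by rw [z1, z2]⟩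
  · -- n = 4
    exfalso
    have e1 := congrFun hfix 1
    have e2 := congrFun hfix 2
    simp only [Function.iterate_succ, Function.iterate_zero, Function.comp_apply, id_eq, ducci,
      hcyc, i01, i11, i21] at e1 e2
    exact hne ⟨by linear_combination e1 - 5 * hsum, by linear_combination e2 - 5 * hsum⟩
  · -- n = 5
    exfalso
    have e0 := congrFun hfix 0
    have e1 := congrFun hfix 1
    have e2 := congrFun hfix 2
    simp only [Function.iterate_succ, Function.iterate_zero, Function.comp_apply, id_eq, ducci,
      hcyc, i01, i11, i21] at e0 e1 e2
    exact hne ⟨by linear_combination e1 - e2, by linear_combination e2 - e0⟩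
  · rfl
end

section
/- For the Ducci map on Z_m^3, define a_r, b_r, c_r by D^r(0,0,1) = (c_r, b_r, a_r) computed over the integers (i.e. a_r = a_{r,1}, b_r = a_{r,2}, c_r = a_{r,3} are the integer coefficients of x_1, x_2, x_3 in the first entry of D^r(x_1,x_2,x_3)). Then for r, t ≥ 1: a_{r+t} = a_t a_r + b_t c_r + c_t b_r, b_{r+t} = a_t b_r + b_t a_r + c_t c_r, and c_{r+t} = a_t c_r + b_t b_r + c_t a_r. -/
theorem ducci_coeff_sum_n3 (a b c : ℕ → ℤ)
    (ha0 : a 0 = 1) (hb0 : b 0 = 0) (hc0 : c 0 = 0)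
    (ha : ∀ r, a (r + 1) = a r + c r)
    (hb : ∀ r, b (r + 1) = b r + a r)
    (hc : ∀ r, c (r + 1) = c r + b r)
    (r t : ℕ) (hr : 1 ≤ r) (ht : 1 ≤ t) :
    a (r + t) = a t * a r + b t * c r + c t * b r ∧
    b (r + t) = a t * b r + b t * a r + c t * c r ∧
    c (r + t) = a t * c r + b t * b r + c t * a r := by
  induction t with
  | zero =>
    simp only [Nat.add_zero, ha0, hb0, hc0]
    refine ⟨by ring, by ring, by ring⟩
  | succ t ih =>
    rcases Nat.eq_zero_or_pos t with h | h
    · subst h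
      simp only [Nat.zero_add, Nat.add_zero, ha, hb, hc, ha0, hb0, hc0]
      refine ⟨by ring, by ring, by ring⟩
    · obtain ⟨h1, h2, h3⟩ := ih h
      rw [show r + (t + 1) = (r + t) + 1 from rfl]
      simp only [ha, hb, hc, h1, h2, h3]
      refine ⟨by ring, by ring, by ring⟩
end

section
/- For every m ≥ 3, 6 divides P_m(3), where P_m(3) is the period of the basic Ducci sequence of (0,0,1) in Z_m^3. -/
def Wz : Fin 6 → Fin 3 → ℤ :=
  ![![0,0,1], ![0,1,1], ![0,1,0], ![0,0,-1], ![0,-1,-1], ![0,-1,0]]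

def Tz : Fin 6 → ℤ := ![0,1,1,0,-1,-1]

lemma Wz_step : ∀ (k : Fin 6) (i : Fin 3),
    Wz k i + Wz k (i + 1) = Tz k + Wz (k + 1) i := by decide

lemma Wz_zero : ∀ k : Fin 6, Wz k 0 = 0 := by decide

lemma Wz_inj : ∀ a b : Fin 6, Wz a 1 = Wz b 1 → Wz a 2 = Wz b 2 → a = b := by decide

lemma Wz_bound : ∀ (k : Fin 6) (i : Fin 3), -1 ≤ Wz k i ∧ Wz k i ≤ 1 := by decide

lemma orbit (m : ℕ) (n : ℕ) :
    ∃ s : ZMod m, ducci^[n] ![0, 0, 1]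
      = fun i => s + ((Wz ⟨n % 6, Nat.mod_lt _ (by norm_num)⟩ i : ℤ) : ZMod m) := by
  induction n with
  | zero =>
    refine ⟨0, ?_⟩
    funext i
    fin_cases i <;> simp [Wz]
  | succ n ih =>
    obtain ⟨s, hs⟩ := ih
    refine ⟨s + s + ((Tz ⟨n % 6, Nat.mod_lt _ (by norm_num)⟩ : ℤ) : ZMod m), ?_⟩
    rw [Function.iterate_succ_apply', hs]
    have hfin : (⟨(n+1) % 6, Nat.mod_lt _ (by norm_num)⟩ : Fin 6)
        = ⟨n % 6, Nat.mod_lt _ (by norm_num)⟩ + 1 := by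
      apply Fin.ext
      simp only [Fin.add_def]
      omega
    rw [hfin]
    funext i
    have h := Wz_step ⟨n % 6, Nat.mod_lt _ (by norm_num)⟩ i
    have h' : ((Wz ⟨n % 6, Nat.mod_lt _ (by norm_num)⟩ i : ℤ) : ZMod m)
        + ((Wz ⟨n % 6, Nat.mod_lt _ (by norm_num)⟩ (i + 1) : ℤ) : ZMod m)
        = ((Tz ⟨n % 6, Nat.mod_lt _ (by norm_num)⟩ : ℤ) : ZMod m)
        + ((Wz (⟨n % 6, Nat.mod_lt _ (by norm_num)⟩ + 1) i : ℤ) : ZMod m) := by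
      exact_mod_cast congrArg (fun x : ℤ => ((x : ZMod m))) h
    simp only [ducci]
    linear_combination h'

theorem six_dvd_Pm3 (m : ℕ) (hm : 3 ≤ m) :
    6 ∣ sInf {β : ℕ | 0 < β ∧ ∃ α : ℕ,
        ducci^[α + β] (![0, 0, 1] : Fin 3 → ZMod m) = ducci^[α] ![0, 0, 1]} := by
  have inj : ∀ x y : ℤ, -1 ≤ x → x ≤ 1 → -1 ≤ y → y ≤ 1 →
      ((x : ZMod m) = (y : ZMod m)) → x = y := by
    intro x y hx1 hx2 hy1 hy2 h
    have hdvd : (m : ℤ) ∣ y - x := ((ZMod.intCast_eq_intCast_iff x y m).mp h).dvd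
    obtain ⟨k, hk⟩ := hdvd
    have hm' : (3 : ℤ) ≤ (m : ℤ) := by exact_mod_cast hm
    have hk0 : k = 0 := by
      by_contra hk0
      rcases lt_or_gt_of_ne hk0 with h' | h'
      · nlinarith
      · nlinarith
    subst hk0
    simp at hk
    omega
  have key : ∀ β ∈ {β : ℕ | 0 < β ∧ ∃ α : ℕ,
      ducci^[α + β] (![0, 0, 1] : Fin 3 → ZMod m) = ducci^[α] ![0, 0, 1]}, 6 ∣ β := by
    rintro β ⟨-, α, hαβ⟩
    obtain ⟨s, hs⟩ := orbit m (α + β)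
    obtain ⟨s', hs'⟩ := orbit m α
    rw [hs, hs'] at hαβ
    set a : Fin 6 := ⟨(α + β) % 6, Nat.mod_lt _ (by norm_num)⟩ with ha
    set b : Fin 6 := ⟨α % 6, Nat.mod_lt _ (by norm_num)⟩ with hb
    have h0 := congrFun hαβ 0
    have h1 := congrFun hαβ 1
    have h2 := congrFun hαβ 2
    rw [Wz_zero, Wz_zero] at h0
    simp only [Int.cast_zero, add_zero] at h0
    rw [h0] at h1 h2
    have h1' := add_left_cancel h1
    have h2' := add_left_cancel h2
    have e1 : Wz a 1 = Wz b 1 :=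
      inj _ _ (Wz_bound a 1).1 (Wz_bound a 1).2 (Wz_bound b 1).1 (Wz_bound b 1).2 h1'
    have e2 : Wz a 2 = Wz b 2 :=
      inj _ _ (Wz_bound a 2).1 (Wz_bound a 2).2 (Wz_bound b 2).1 (Wz_bound b 2).2 h2'
    have hab : a = b := Wz_inj a b e1 e2
    have : (α + β) % 6 = α % 6 := congrArg Fin.val hab
    omega
  rcases Set.eq_empty_or_nonempty {β : ℕ | 0 < β ∧ ∃ α : ℕ,
      ducci^[α + β] (![0, 0, 1] : Fin 3 → ZMod m) = ducci^[α] ![0, 0, 1]} with h | h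
  · rw [h, Nat.sInf_empty]; exact dvd_zero 6
  · exact key _ (Nat.sInf_mem h)
end

section
/- Let m > 2 and n = 3. Then there exists a tuple u ∈ Z_m^3 with Ducci period exactly 6. -/
/-!
On tuples with coordinate sum zero the Ducci map satisfies `D³ = -1`: writing `D = 1 + S` with
`S` the cyclic shift, `D³ = 2 + 3S + 3S²`, and `1 + S + S² = 0` on that plane. Hence
`u = (1, -1, 0)` is purely periodic with period dividing `6`, and the period is exactly `6`
because both `D² u` and `D³ u` have first coordinate `-1 ≠ 1` once `m > 2`.
-/

open Function

theorem sInf_eventualPeriods_eq_minimalPeriod {α : Type*} {f : α → α} {x : α}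
    (hx : x ∈ periodicPts f) :
    sInf {β : ℕ | 0 < β ∧ ∃ a : ℕ, f^[a + β] x = f^[a] x} = minimalPeriod f x := by
  have hperiodic : ∀ β, (∃ a : ℕ, f^[a + β] x = f^[a] x) → IsPeriodicPt f β x := by
    rintro β ⟨a, ha⟩
    refine isPeriodicPt_of_mem_periodicPts_of_isPeriodicPt_iterate (n := a) hx ?_
    rwa [IsPeriodicPt, IsFixedPt, ← iterate_add_apply, add_comm]
  have hmin : minimalPeriod f x ∈ {β : ℕ | 0 < β ∧ ∃ a : ℕ, f^[a + β] x = f^[a] x} :=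
    ⟨minimalPeriod_pos_of_mem_periodicPts hx, 0, by simp⟩
  refine le_antisymm (Nat.sInf_le hmin) (le_csInf ⟨_, hmin⟩ ?_)
  rintro β ⟨hβ, hshift⟩
  exact (hperiodic β hshift).minimalPeriod_le hβ

theorem minimalPeriod_eq_six {α : Type*} {f : α → α} {x : α} (h6 : IsPeriodicPt f 6 x)
    (h2 : ¬IsPeriodicPt f 2 x) (h3 : ¬IsPeriodicPt f 3 x) : minimalPeriod f x = 6 := by
  have hdvd : minimalPeriod f x ∣ 6 := h6.minimalPeriod_dvd
  have hpos : 0 < minimalPeriod f x := h6.minimalPeriod_pos (by norm_num)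
  have hle : minimalPeriod f x ≤ 6 := Nat.le_of_dvd (by norm_num) hdvd
  rw [isPeriodicPt_iff_minimalPeriod_dvd] at h2 h3
  interval_cases h : minimalPeriod f x <;> omega

theorem ducci_iterate_three_of_sum_eq_zero {m : ℕ} (u : Fin 3 → ZMod m) (hu : ∑ i, u i = 0) :
    ducci^[3] u = -u := by
  rw [Fin.sum_univ_three] at hu
  funext i
  fin_cases i <;>
    simp only [Fin.zero_eta, Fin.mk_one, Fin.reduceFinMk, Fin.isValue, iterate_succ, iterate_zero, id_eq,
      comp_apply, ducci, Fin.reduceAdd, zero_add, Pi.neg_apply] <;>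
    linear_combination 3 * hu

theorem isPeriodicPt_ducci_six_of_sum_eq_zero {m : ℕ} {u : Fin 3 → ZMod m}
    (hu : ∑ i, u i = 0) : IsPeriodicPt ducci 6 u := by
  have hneg : ∑ i, (-u) i = 0 := by simp [hu]
  rw [IsPeriodicPt, IsFixedPt, show 6 = 3 + 3 from rfl, iterate_add_apply,
    ducci_iterate_three_of_sum_eq_zero u hu, ducci_iterate_three_of_sum_eq_zero _ hneg, neg_neg]

theorem exists_period_six (m : ℕ) (hm : 2 < m) :
    ∃ u : Fin 3 → ZMod m,
      sInf {β : ℕ | 0 < β ∧ ∃ α : ℕ, ducci^[α + β] u = ducci^[α] u} = 6 := by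
  have htwo : (2 : ZMod m) ≠ 0 := by
    exact_mod_cast (ZMod.natCast_eq_zero_iff 2 m).not.mpr (Nat.not_dvd_of_pos_of_lt two_pos hm)
  have hneg_one : (-1 : ZMod m) ≠ 1 := fun h => htwo (by linear_combination -h)
  set u : Fin 3 → ZMod m := ![1, -1, 0]
  have hsum : ∑ i, u i = 0 := by simp [u, Fin.sum_univ_three]
  have h6 := isPeriodicPt_ducci_six_of_sum_eq_zero hsum
  refine ⟨u, ?_⟩
  rw [sInf_eventualPeriods_eq_minimalPeriod (mk_mem_periodicPts (by norm_num) h6)]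
  refine minimalPeriod_eq_six h6 (fun h2 => hneg_one ?_) (fun h3 => hneg_one ?_)
  · have h := congrFun h2.eq 0
    simp only [Fin.isValue, iterate_succ, iterate_zero, id_eq, comp_apply, ducci, Matrix.cons_val_zero,
      Matrix.cons_val_one, Fin.reduceAdd, Matrix.cons_val, u] at h
    linear_combination h
  · have h := congrFun h3.eq 0
    rw [ducci_iterate_three_of_sum_eq_zero u hsum] at h
    simpa [u] using h
end

section
/- Let m be an odd prime and u = (x_1, x_2, x_3) ∈ Z_m^3 with x_1+x_2+x_3 ≢ 0 mod m and x_1, x_2, x_3 not all equal. Then Per(u) = P_m(3), the maximal Ducci period on Z_m^3 (the period of the basic sequence of (0,0,1)). -/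
lemma ducci_a {m : ℕ} (v : Fin 3 → ZMod m) : ducci v 0 = v 0 + v 1 := rfl
lemma ducci_b {m : ℕ} (v : Fin 3 → ZMod m) : ducci v 1 = v 1 + v 2 := rfl
lemma ducci_c {m : ℕ} (v : Fin 3 → ZMod m) : ducci v 2 = v 2 + v 0 := rfl

lemma sum_ducci {m : ℕ} (v : Fin 3 → ZMod m) :
    ducci v 0 + ducci v 1 + ducci v 2 = 2 * (v 0 + v 1 + v 2) := by
  rw [ducci_a, ducci_b, ducci_c]; ring

lemma sum_iter {m : ℕ} (n : ℕ) (v : Fin 3 → ZMod m) :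
    (ducci^[n] v) 0 + (ducci^[n] v) 1 + (ducci^[n] v) 2
      = 2 ^ n * (v 0 + v 1 + v 2) := by
  induction n with
  | zero => simp
  | succ n ih =>
    rw [Function.iterate_succ_apply', sum_ducci, ih]; ring

lemma ducci_six {m : ℕ} (v : Fin 3 → ZMod m) :
    ducci^[6] v = fun i => v i + 21 * (v 0 + v 1 + v 2) := by
  have h : ducci^[6] v = ducci (ducci (ducci (ducci (ducci (ducci v))))) := rfl
  rw [h]; funext i
  fin_cases i <;> simp [ducci] <;> ring

lemma iter_six_mul {m : ℕ} (k : ℕ) (v : Fin 3 → ZMod m) :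
    ducci^[6*k] v
      = fun i => v i + 21 * (∑ j ∈ Finset.range k, (64:ZMod m)^j) * (v 0 + v 1 + v 2) := by
  induction k generalizing v with
  | zero => funext i; simp
  | succ k ih =>
    have h1 : 6*(k+1) = 6*k + 6 := by ring
    rw [h1, Function.iterate_add_apply, ih (ducci^[6] v), ducci_six v]
    funext i
    simp only [geom_sum_succ]
    ring

lemma ducci_wmap {m : ℕ} (v : Fin 3 → ZMod m) :
    ducci (fun i => v i - v (i+1)) = fun i => ducci v i - ducci v (i+1) := by
  funext i; simp only [ducci]; ring

lemma iter_wmap {m : ℕ} (n : ℕ) (v : Fin 3 → ZMod m) :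
    ducci^[n] (fun i => v i - v (i+1)) = fun i => (ducci^[n] v) i - (ducci^[n] v) (i+1) := by
  induction n generalizing v with
  | zero => rfl
  | succ n ih =>
    rw [Function.iterate_succ_apply', Function.iterate_succ_apply', ih, ← ducci_wmap]

lemma key {m : ℕ} (hp : m.Prime) (hodd : Odd m) (u : Fin 3 → ZMod m)
    (hsum : u 0 + u 1 + u 2 ≠ 0) (hne : ¬ (u 0 = u 1 ∧ u 1 = u 2)) (β : ℕ) :
    ducci^[β] u = u ↔ ((2:ZMod m)^β = 1 ∧ 6 ∣ β) := by
  haveI : Fact m.Prime := ⟨hp⟩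
  have h2ne : (2 : ZMod m) ≠ 0 := by
    intro h
    have h2 : ((2:ℕ) : ZMod m) = 0 := by exact_mod_cast h
    haveI : NeZero m := ⟨hp.pos.ne'⟩
    have hdvd : m ∣ 2 := (ZMod.natCast_eq_zero_iff 2 m).mp h2
    have hle : m ≤ 2 := Nat.le_of_dvd (by norm_num) hdvd
    have h2le : 2 ≤ m := hp.two_le
    obtain ⟨t, ht⟩ := hodd
    omega
  constructor
  · intro h
    have hs := sum_iter β u
    rw [h] at hs
    have hpow : (2:ZMod m)^β = 1 := by
      have hz : ((2:ZMod m)^β - 1) * (u 0 + u 1 + u 2) = 0 := by linear_combination -hs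
      rcases mul_eq_zero.mp hz with hz | hz
      · linear_combination hz
      · exact absurd hz hsum
    refine ⟨hpow, ?_⟩
    by_cases h3 : (3 : ZMod m) = 0
    · -- m = 3 case
      have h21 : (21 : ZMod m) = 0 := by linear_combination 7 * h3
      have hid : ducci^[6 * (β / 6)] u = u := by
        rw [iter_six_mul]; funext i; rw [h21]; ring
      have hru : ducci^[β % 6] u = u := by
        have hsplit : β % 6 + 6 * (β / 6) = β := Nat.mod_add_div β 6
        rw [← hsplit, Function.iterate_add_apply, hid] at h
        exact h
      obtain ⟨r, hr, hlt⟩ : ∃ r, β % 6 = r ∧ r < 6 :=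
        ⟨β % 6, rfl, Nat.mod_lt _ (by norm_num)⟩
      rw [hr] at hru
      interval_cases r
      · exact Nat.dvd_of_mod_eq_zero hr
      · replace hru : ducci u = u := hru
        have h0 := congrFun hru 0
        have h1 := congrFun hru 1
        have h2 := congrFun hru 2
        simp only [ducci_a, ducci_b, ducci_c] at h0 h1 h2
        exact absurd (by linear_combination h2 + h0 + h1 :
          u 0 + u 1 + u 2 = 0) hsum
      · replace hru : ducci (ducci u) = u := hru
        have h0 := congrFun hru 0
        have h2 := congrFun hru 2
        simp only [ducci_a, ducci_b, ducci_c] at h0 h2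
        exact absurd ⟨by linear_combination u 0 * h3 - h2,
          by linear_combination u 1 * h3 - h0⟩ hne
      · replace hru : ducci (ducci (ducci u)) = u := hru
        have h0 := congrFun hru 0
        have h1 := congrFun hru 1
        have h2 := congrFun hru 2
        simp only [ducci_a, ducci_b, ducci_c] at h0 h1 h2
        have ha : u 0 = 0 := by linear_combination h0 - (u 1 + u 2) * h3
        have hb : u 1 = 0 := by linear_combination h1 - (u 2 + u 0) * h3
        have hc : u 2 = 0 := by linear_combination h2 - (u 0 + u 1) * h3
        exact absurd (by rw [ha, hb, hc]; ring : u 0 + u 1 + u 2 = 0) hsum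
      · replace hru : ducci (ducci (ducci (ducci u))) = u := hru
        have h0 := congrFun hru 0
        have h1 := congrFun hru 1
        simp only [ducci_a, ducci_b, ducci_c] at h0 h1
        exact absurd ⟨by linear_combination h0 - (u 0 + 2*u 1 + 2*u 2) * h3,
          by linear_combination h1 - (u 1 + 2*u 2 + 2*u 0) * h3⟩ hne
      · replace hru : ducci (ducci (ducci (ducci (ducci u)))) = u := hru
        have h0 := congrFun hru 0
        have h1 := congrFun hru 1
        have h2 := congrFun hru 2
        simp only [ducci_a, ducci_b, ducci_c] at h0 h1 h2
        exact absurd ⟨by linear_combination h1 - h2, by linear_combination h2 - h0⟩ hne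
    · -- m ≠ 3 case : use difference vector w
      set w : Fin 3 → ZMod m := fun i => u i - u (i+1) with hwdef
      have ea : w 0 = u 0 - u 1 := rfl
      have eb : w 1 = u 1 - u 2 := rfl
      have ec : w 2 = u 2 - u 0 := rfl
      have hsw : w 0 + w 1 + w 2 = 0 := by rw [ea, eb, ec]; ring
      have hwne : ¬ (w 0 = 0 ∧ w 1 = 0) := by
        rintro ⟨ha, hb⟩
        exact hne ⟨sub_eq_zero.mp (ea ▸ ha), sub_eq_zero.mp (eb ▸ hb)⟩
      have hw : ducci^[β] w = w := by
        rw [hwdef, iter_wmap, h]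
      have hid : ducci^[6 * (β / 6)] w = w := by
        rw [iter_six_mul]; funext i; rw [hsw]; ring
      have hru : ducci^[β % 6] w = w := by
        have hsplit : β % 6 + 6 * (β / 6) = β := Nat.mod_add_div β 6
        rw [← hsplit, Function.iterate_add_apply, hid] at hw
        exact hw
      obtain ⟨r, hr, hlt⟩ : ∃ r, β % 6 = r ∧ r < 6 :=
        ⟨β % 6, rfl, Nat.mod_lt _ (by norm_num)⟩
      rw [hr] at hru
      have hof : ∀ x : ZMod m, (3:ZMod m) * x = 0 → x = 0 := by
        intro x hx
        rcases mul_eq_zero.mp hx with hx | hx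
        · exact absurd hx h3
        · exact hx
      have hof2 : ∀ x : ZMod m, (2:ZMod m) * x = 0 → x = 0 := by
        intro x hx
        rcases mul_eq_zero.mp hx with hx | hx
        · exact absurd hx h2ne
        · exact hx
      interval_cases r
      · exact Nat.dvd_of_mod_eq_zero hr
      · replace hru : ducci w = w := hru
        have h0 := congrFun hru 0
        have h1 := congrFun hru 1
        simp only [ducci_a, ducci_b, ducci_c] at h0 h1
        have hb : w 1 = 0 := by linear_combination h0
        have hc : w 2 = 0 := by linear_combination h1
        have ha : w 0 = 0 := by linear_combination hsw - h0 - h1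
        exact absurd ⟨ha, hb⟩ hwne
      · replace hru : ducci (ducci w) = w := hru
        have h0 := congrFun hru 0
        have h1 := congrFun hru 1
        simp only [ducci_a, ducci_b, ducci_c] at h0 h1
        have hb : w 1 = 0 := hof _ (by linear_combination h0 - h1 + hsw)
        have ha : w 0 = 0 := by linear_combination hsw - h0 + hb
        exact absurd ⟨ha, hb⟩ hwne
      · replace hru : ducci (ducci (ducci w)) = w := hru
        have h0 := congrFun hru 0
        have h1 := congrFun hru 1
        simp only [ducci_a, ducci_b, ducci_c] at h0 h1
        have ha : w 0 = 0 := hof2 _ (by linear_combination 3*hsw - h0)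
        have hb : w 1 = 0 := hof2 _ (by linear_combination 3*hsw - h1)
        exact absurd ⟨ha, hb⟩ hwne
      · replace hru : ducci (ducci (ducci (ducci w))) = w := hru
        have h0 := congrFun hru 0
        have h1 := congrFun hru 1
        have h2 := congrFun hru 2
        simp only [ducci_a, ducci_b, ducci_c] at h0 h1 h2
        have ha : w 0 = 0 := hof _ (by linear_combination h1 - h0 + hsw)
        have hb : w 1 = 0 := hof _ (by linear_combination h2 - h1 + hsw)
        exact absurd ⟨ha, hb⟩ hwne
      · replace hru : ducci (ducci (ducci (ducci (ducci w)))) = w := hru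
        have h0 := congrFun hru 0
        have h1 := congrFun hru 1
        have h2 := congrFun hru 2
        simp only [ducci_a, ducci_b, ducci_c] at h0 h1 h2
        have ha : w 0 = 0 := by linear_combination h1 - 10*hsw
        have hb : w 1 = 0 := by linear_combination h2 - 10*hsw
        exact absurd ⟨ha, hb⟩ hwne
  · rintro ⟨hpow, k, rfl⟩
    rw [iter_six_mul]
    have h64 : (64:ZMod m)^k = 1 := by
      have h6 : (64:ZMod m) = 2^6 := by norm_num
      rw [h6, ← pow_mul]; exact hpow
    have h63 : (∑ j ∈ Finset.range k, (64:ZMod m)^j) * 63 = 0 := by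
      have hg := geom_sum_mul (64:ZMod m) k
      rw [h64] at hg
      linear_combination hg
    have hzero : (21:ZMod m) * (∑ j ∈ Finset.range k, (64:ZMod m)^j) = 0 := by
      by_cases h3 : (3 : ZMod m) = 0
      · have h21 : (21 : ZMod m) = 0 := by linear_combination 7 * h3
        rw [h21, zero_mul]
      · have h33 : (3:ZMod m) * ((21:ZMod m) * (∑ j ∈ Finset.range k, (64:ZMod m)^j)) = 0 := by
          linear_combination h63
        rcases mul_eq_zero.mp h33 with hx | hx
        · exact absurd hx h3
        · exact hx
    funext i
    rw [hzero]; ring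

theorem period_eq_max_of_prime (m : ℕ) (hp : m.Prime) (hodd : Odd m)
    (u : Fin 3 → ZMod m)
    (hsum : u 0 + u 1 + u 2 ≠ 0)
    (hne : ¬ (u 0 = u 1 ∧ u 1 = u 2)) :
    sInf {β : ℕ | 0 < β ∧ ducci^[β] u = u} =
      sInf {β : ℕ | 0 < β ∧ ducci^[β] (![0, 0, 1] : Fin 3 → ZMod m) = ![0, 0, 1]} := by
  haveI : Fact m.Prime := ⟨hp⟩
  have hesum : (![0, 0, 1] : Fin 3 → ZMod m) 0 + (![0, 0, 1] : Fin 3 → ZMod m) 1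
      + (![0, 0, 1] : Fin 3 → ZMod m) 2 ≠ 0 := by
    simp
  have hene : ¬ ((![0, 0, 1] : Fin 3 → ZMod m) 0 = (![0, 0, 1] : Fin 3 → ZMod m) 1
      ∧ (![0, 0, 1] : Fin 3 → ZMod m) 1 = (![0, 0, 1] : Fin 3 → ZMod m) 2) := by
    simp
  have hset : {β : ℕ | 0 < β ∧ ducci^[β] u = u} =
      {β : ℕ | 0 < β ∧ ducci^[β] (![0, 0, 1] : Fin 3 → ZMod m) = ![0, 0, 1]} := by
    ext β
    simp only [Set.mem_setOf_eq]
    constructor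
    · rintro ⟨hb, hh⟩
      exact ⟨hb, (key hp hodd _ hesum hene β).mpr ((key hp hodd u hsum hne β).mp hh)⟩
    · rintro ⟨hb, hh⟩
      exact ⟨hb, (key hp hodd u hsum hne β).mpr ((key hp hodd _ hesum hene β).mp hh)⟩
  rw [hset]
end
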